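/- Let A, Y, M, Z, X be discrete with Y ⊥ Z | (A,M,X), and suppose for all m,x: Σ_z q_a(z,a',x)·p(z | m, a', x) = p(m|a,x)/p(m|a',x). Then Σ_{y,m} y·p(y | m, a', x)·p(m | a, x) = Σ_{y,m,z} y·q_a(z,a',x)·p(y, z, m | a', x) for every x. -/
import Mathlib

open Finset
open scoped Classical

noncomputable section

/-- Probability of an event under weights `mu`. -/
def pr {O : Type} [Fintype O] (mu : O -> Real) (s : O -> Prop) : Real :=
  Finset.univ.sum (fun w => if s w then mu w else 0)

/-- Conditional probability `P(s | t)`. -/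
def cpr {O : Type} [Fintype O] (mu : O -> Real) (s t : O -> Prop) : Real :=
  pr mu (fun w => s w /\ t w) / pr mu t

/-- Expectation of `f`. -/
def expec {O : Type} [Fintype O] (mu : O -> Real) (f : O -> Real) : Real :=
  Finset.univ.sum (fun w => f w * mu w)

/-- Conditional expectation `E[f | t]`. -/
def cexp {O : Type} [Fintype O] (mu : O -> Real) (f : O -> Real) (t : O -> Prop) : Real :=
  (Finset.univ.sum (fun w => if t w then f w * mu w else 0)) / pr mu t

lemma pr_congr {O : Type} [Fintype O] (mu : O → ℝ) {s s' : O → Prop}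
    (h : ∀ o, s o ↔ s' o) : pr mu s = pr mu s' := by
  unfold pr; exact Finset.sum_congr rfl fun o _ => if_congr (h o) rfl rfl

lemma pr_mono {O : Type} [Fintype O] (mu : O → ℝ) (hmu0 : ∀ o, 0 ≤ mu o)
    {s s' : O → Prop} (h : ∀ o, s o → s' o) : pr mu s ≤ pr mu s' := by
  unfold pr
  apply Finset.sum_le_sum
  intro o _
  by_cases hs : s o <;> by_cases hs' : s' o <;> simp [hs, hs', hmu0 o]
  exact absurd (h o hs) hs'

lemma expandY {O : Type} [Fintype O] (mu : O → ℝ) (Y : O → ℝ) (t : O → Prop)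
    [DecidablePred t] :
    (∑ o, if t o then Y o * mu o else 0) =
      ∑ y ∈ Finset.image Y Finset.univ, y * pr mu (fun o => Y o = y ∧ t o) := by
  unfold pr
  simp_rw [Finset.mul_sum, mul_ite, mul_zero]
  rw [Finset.sum_comm]
  refine Finset.sum_congr rfl fun o _ => ?_
  by_cases h : t o
  · simp only [h, and_true, ite_and]
    rw [Finset.sum_ite_eq (Finset.image Y Finset.univ) (Y o) (fun y => y * mu o)]
    simp [Finset.mem_image_of_mem]
  · simp [h]

lemma ite_inst_eq {α : Sort*} {p : Prop} (i1 i2 : Decidable p) (a b : α) :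
    @ite α p i1 a b = @ite α p i2 a b := by
  cases Subsingleton.elim i1 i2; rfl

theorem stmt18
    {O TA TM TZ TW TX : Type}
    [Fintype O] [Fintype TA] [Fintype TM] [Fintype TZ] [Fintype TW] [Fintype TX]
    [DecidableEq TA] [DecidableEq TM] [DecidableEq TZ] [DecidableEq TW] [DecidableEq TX]
    (mu : O -> Real) (hmu0 : forall o : O, 0 <= mu o)
    (hmu1 : Finset.univ.sum mu = 1)
    (A : O -> TA) (Y : O -> Real) (M : O -> TM) (Z : O -> TZ) (W : O -> TW) (X : O -> TX)
    (a a' : TA) (q : TZ -> TA -> TX -> Real)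
    (hYZ : forall (y : Real) (z : TZ) (t : TA) (m : TM) (x : TX),
      pr mu (fun o => Y o = y /\ Z o = z /\ A o = t /\ M o = m /\ X o = x) *
        pr mu (fun o => A o = t /\ M o = m /\ X o = x) =
      pr mu (fun o => Y o = y /\ A o = t /\ M o = m /\ X o = x) *
        pr mu (fun o => Z o = z /\ A o = t /\ M o = m /\ X o = x))
    (hpos : forall (m : TM) (x : TX), 0 < pr mu (fun o => X o = x) ->
      0 < pr mu (fun o => M o = m /\ A o = a' /\ X o = x))
    (hq : forall (m : TM) (x : TX),
      Finset.univ.sum (fun z : TZ =>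
        q z a' x * cpr mu (fun o => Z o = z) (fun o => M o = m /\ A o = a' /\ X o = x)) =
      cpr mu (fun o => M o = m) (fun o => A o = a /\ X o = x) /
        cpr mu (fun o => M o = m) (fun o => A o = a' /\ X o = x)) :
    forall x : TX, 0 < pr mu (fun o => X o = x) ->
      Finset.univ.sum (fun m : TM =>
        cexp mu Y (fun o => M o = m /\ A o = a' /\ X o = x) *
          cpr mu (fun o => M o = m) (fun o => A o = a /\ X o = x)) =
      cexp mu (fun o => Y o * q (Z o) a' x) (fun o => A o = a' /\ X o = x) := by
  intro x hx
  have hm : ∀ m : TM, 0 < pr mu (fun o => M o = m ∧ A o = a' ∧ X o = x) :=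
    fun m => hpos m x hx
  have hO : Nonempty O := by
    by_contra h
    rw [not_nonempty_iff] at h
    simp [pr, Finset.univ_eq_empty] at hx
  have ht2 : 0 < pr mu (fun o => A o = a' ∧ X o = x) :=
    lt_of_lt_of_le (hm (M (Classical.arbitrary O)))
      (pr_mono mu hmu0 (fun o h => h.2))
  set K : ℝ := pr mu (fun o => A o = a' ∧ X o = x) with hK
  set N : TM → ℝ :=
    fun m => ∑ o, if M o = m ∧ A o = a' ∧ X o = x then Y o * mu o else 0 with hNdef
  set P : TM → ℝ := fun m => pr mu (fun o => M o = m ∧ A o = a' ∧ X o = x) with hPdef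
  set PZ : TZ → TM → ℝ :=
    fun z m => pr mu (fun o => Z o = z ∧ M o = m ∧ A o = a' ∧ X o = x) with hPZdef
  set ca : TM → ℝ :=
    fun m => cpr mu (fun o => M o = m) (fun o => A o = a ∧ X o = x) with hcadef
  have hK0 : K ≠ 0 := ne_of_gt ht2
  have hP0 : ∀ m : TM, P m ≠ 0 := fun m => ne_of_gt (hm m)
  -- conditional independence step
  have CI : ∀ (z : TZ) (m : TM),
      (∑ o, if Z o = z ∧ M o = m ∧ A o = a' ∧ X o = x then Y o * mu o else 0) * P m
        = N m * PZ z m := by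
    intro z m
    simp only [hNdef, hPdef, hPZdef]
    rw [expandY, expandY, Finset.sum_mul, Finset.sum_mul]
    refine Finset.sum_congr rfl fun y _ => ?_
    have h1 : pr mu (fun o => Y o = y ∧ Z o = z ∧ M o = m ∧ A o = a' ∧ X o = x)
        = pr mu (fun o => Y o = y ∧ Z o = z ∧ A o = a' ∧ M o = m ∧ X o = x) :=
      pr_congr mu (by tauto)
    have h2 : pr mu (fun o => M o = m ∧ A o = a' ∧ X o = x)
        = pr mu (fun o => A o = a' ∧ M o = m ∧ X o = x) := pr_congr mu (by tauto)
    have h3 : pr mu (fun o => Y o = y ∧ M o = m ∧ A o = a' ∧ X o = x)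
        = pr mu (fun o => Y o = y ∧ A o = a' ∧ M o = m ∧ X o = x) := pr_congr mu (by tauto)
    have h4 : pr mu (fun o => Z o = z ∧ M o = m ∧ A o = a' ∧ X o = x)
        = pr mu (fun o => Z o = z ∧ A o = a' ∧ M o = m ∧ X o = x) := pr_congr mu (by tauto)
    rw [mul_assoc, mul_assoc, h1, h2, h3, h4, hYZ y z a' m x]
  -- pointwise partition of the RHS numerator
  have hsplit : ∀ o : O,
      (if A o = a' ∧ X o = x then Y o * q (Z o) a' x * mu o else 0) =
      ∑ z : TZ, ∑ m : TM,
        (if Z o = z ∧ M o = m ∧ A o = a' ∧ X o = x then q z a' x * (Y o * mu o) else 0) := by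
    intro o
    by_cases h : A o = a' ∧ X o = x
    · simp only [h, and_true]
      rw [Finset.sum_eq_single (Z o)]
      · rw [Finset.sum_eq_single (M o)]
        · simp; ring
        · intro b _ hb; simp [Ne.symm hb]
        · intro hb; exact absurd (Finset.mem_univ (M o)) hb
      · intro b _ hb
        apply Finset.sum_eq_zero
        intro m _
        simp [Ne.symm hb]
      · intro hb; exact absurd (Finset.mem_univ (Z o)) hb
    · simp only [h, and_false, if_false]
      symm; apply Finset.sum_eq_zero; intro z _
      apply Finset.sum_eq_zero; intro m _
      have : ¬ (Z o = z ∧ M o = m ∧ A o = a' ∧ X o = x) := by tauto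
      simp [this]
  -- compute the RHS numerator
  have hNum : (∑ o, if A o = a' ∧ X o = x then Y o * q (Z o) a' x * mu o else 0)
      = ∑ m : TM, N m * (ca m / (P m / K)) := by
    calc (∑ o, if A o = a' ∧ X o = x then Y o * q (Z o) a' x * mu o else 0)
        = ∑ o, ∑ z : TZ, ∑ m : TM,
            (if Z o = z ∧ M o = m ∧ A o = a' ∧ X o = x then q z a' x * (Y o * mu o) else 0) :=
          Finset.sum_congr rfl fun o _ => hsplit o
      _ = ∑ z : TZ, ∑ m : TM, ∑ o,
            (if Z o = z ∧ M o = m ∧ A o = a' ∧ X o = x then q z a' x * (Y o * mu o) else 0) := by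
          rw [Finset.sum_comm]
          exact Finset.sum_congr rfl fun z _ => Finset.sum_comm
      _ = ∑ z : TZ, ∑ m : TM, q z a' x *
            ∑ o, (if Z o = z ∧ M o = m ∧ A o = a' ∧ X o = x then Y o * mu o else 0) := by
          refine Finset.sum_congr rfl fun z _ => Finset.sum_congr rfl fun m _ => ?_
          rw [Finset.mul_sum]
          exact Finset.sum_congr rfl fun o _ => by rw [mul_ite, mul_zero]
      _ = ∑ z : TZ, ∑ m : TM, q z a' x * (N m * PZ z m / P m) := by
          refine Finset.sum_congr rfl fun z _ => Finset.sum_congr rfl fun m _ => ?_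
          congr 1
          rw [eq_div_iff (hP0 m)]
          exact CI z m
      _ = ∑ m : TM, ∑ z : TZ, q z a' x * (N m * PZ z m / P m) := Finset.sum_comm
      _ = ∑ m : TM, (N m / P m) * ∑ z : TZ, q z a' x * PZ z m := by
          refine Finset.sum_congr rfl fun m _ => ?_
          rw [Finset.mul_sum]
          exact Finset.sum_congr rfl fun z _ => by ring
      _ = ∑ m : TM, (N m / P m) * (P m * ∑ z : TZ,
            q z a' x * cpr mu (fun o => Z o = z) (fun o => M o = m ∧ A o = a' ∧ X o = x)) := by
          refine Finset.sum_congr rfl fun m _ => ?_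
          congr 1
          rw [Finset.mul_sum]
          refine Finset.sum_congr rfl fun z _ => ?_
          have hc : cpr mu (fun o => Z o = z) (fun o => M o = m ∧ A o = a' ∧ X o = x)
              = PZ z m / P m := rfl
          rw [hc, ← mul_div_assoc, ← mul_div_assoc]
          exact (mul_div_cancel_left₀ _ (hP0 m)).symm
      _ = ∑ m : TM, (N m / P m) * (P m * (ca m / (P m / K))) := by
          refine Finset.sum_congr rfl fun m _ => ?_
          rw [hq m x]
          rfl
      _ = ∑ m : TM, N m * (ca m / (P m / K)) := by
          refine Finset.sum_congr rfl fun m _ => ?_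
          have := hP0 m
          field_simp
  -- finish
  have hR : cexp mu (fun o => Y o * q (Z o) a' x) (fun o => A o = a' ∧ X o = x)
      = (∑ m : TM, N m * (ca m / (P m / K))) / K := by
    rw [cexp, ← hNum]
    congr 1
    exact Finset.sum_congr rfl fun o _ => ite_inst_eq _ _ _ _
  rw [hR, Finset.sum_div]
  refine Finset.sum_congr rfl fun m _ => ?_
  have h1 : cexp mu Y (fun o => M o = m ∧ A o = a' ∧ X o = x) = N m / P m := by
    rw [cexp]
    congr 1
    exact Finset.sum_congr rfl fun o _ => ite_inst_eq _ _ _ _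
  rw [h1]
  have hp := hP0 m
  field_simp
  ring
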